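/- arXiv:1903.07617 — 4 statements merged into one kernel-verified Lean document; each statement's English description precedes it below -/
import Mathlib

section
/- Let n ∈ ℝ² be a fixed unit vector, c ∈ ℝ, and let O ⊆ ℝ²×ℝ×ℝ be open. Let u : O → ℝ², v : O → ℝ, p : O → ℝ be C¹ and satisfy the horizontal momentum equation ρ(u_t + (u·∇)u + v u_y) + ∇p = 0 on O. Let S ⊆ O be a relatively open subset of the vertical hyperplane {(x,y,t) : x·n = c}, and assume the impermeability condition u·n = 0 holds at every point of S (a wet portion of a flat vertical wall). Then the normal pressure derivative vanishes on the wall: ∇p·n = 0 at every point of S. -/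
noncomputable section

/-- Space-time points `((x₁,x₂), y, t)`: horizontal position, height, time. -/
abbrev Pt : Type := (ℝ × ℝ) × ℝ × ℝ

/-- Partial derivative `∂_{x₁}`. -/
noncomputable def dX1 (f : Pt → ℝ) (q : Pt) : ℝ :=
  fderiv ℝ f q (((1 : ℝ), (0 : ℝ)), (0 : ℝ), (0 : ℝ))

/-- Partial derivative `∂_{x₂}`. -/
noncomputable def dX2 (f : Pt → ℝ) (q : Pt) : ℝ :=
  fderiv ℝ f q (((0 : ℝ), (1 : ℝ)), (0 : ℝ), (0 : ℝ))

/-- Partial derivative `∂_y`. -/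
noncomputable def dY (f : Pt → ℝ) (q : Pt) : ℝ :=
  fderiv ℝ f q (((0 : ℝ), (0 : ℝ)), (1 : ℝ), (0 : ℝ))

/-- Partial derivative `∂_t`. -/
noncomputable def dT (f : Pt → ℝ) (q : Pt) : ℝ :=
  fderiv ℝ f q (((0 : ℝ), (0 : ℝ)), (0 : ℝ), (1 : ℝ))

/-!
Differentiate the impermeability condition `u·n = 0` along the wall in the direction
`(u, v, 1)`, which is tangent to the wall precisely because `u·n = 0` there. The result is
`n·(u_t + (u·∇)u + v u_y) = 0`, i.e. the normal component of the material acceleration vanishes,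
and the momentum equation turns this into `∇p·n = 0`.
-/

open Filter Topology

theorem fderiv_apply_eq_zero_of_eventually_eq_zero_on_level_set
    {𝕜 E F G : Type*} [NontriviallyNormedField 𝕜]
    [NormedAddCommGroup E] [NormedSpace 𝕜 E] [NormedAddCommGroup F] [NormedSpace 𝕜 F]
    [AddCommGroup G] [Module 𝕜 G]
    {f : E → F} {ℓ : E →ₗ[𝕜] G} {q w : E}
    (hf : ∀ᶠ z in 𝓝 q, ℓ z = ℓ q → f z = 0) (hw : ℓ w = 0) :
    fderiv 𝕜 f q w = 0 := by
  by_cases hd : DifferentiableAt 𝕜 f q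
  · have hline : Tendsto (fun t : 𝕜 => q + t • w) (𝓝 0) (𝓝 q) :=
      Continuous.tendsto' (by fun_prop) _ _ (by simp)
    have hzero : (fun t : 𝕜 => f (q + t • w)) =ᶠ[𝓝 0] fun _ => 0 :=
      (hline.eventually hf).mono fun t ht => ht (by simp [hw])
    rw [← hd.lineDeriv_eq_fderiv, lineDeriv, hzero.deriv_eq, deriv_const]
  · simp [fderiv_zero_of_not_differentiableAt hd]

theorem fderiv_apply_eq_partials (F : Pt → ℝ) (q : Pt) (a b c d : ℝ) :
    fderiv ℝ F q ((a, b), c, d) = a * dX1 F q + b * dX2 F q + c * dY F q + d * dT F q := by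
  have hdecomp : (((a, b), c, d) : Pt) = a • (((1, 0), 0, 0) : Pt) + b • ((0, 1), 0, 0)
      + c • ((0, 0), 1, 0) + d • ((0, 0), 0, 1) := by
    simp
  rw [hdecomp]
  simp only [map_add, map_smul, smul_eq_mul, dX1, dX2, dY, dT]

def horizontalDot (n : ℝ × ℝ) : Pt →ₗ[ℝ] ℝ where
  toFun z := z.1.1 * n.1 + z.1.2 * n.2
  map_add' z z' := by simp only [Prod.fst_add, Prod.snd_add]; ring
  map_smul' a z := by simp only [Prod.smul_fst, Prod.smul_snd, smul_eq_mul, RingHom.id_apply]; ring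

theorem wall_pressure_normal_derivative_general
    (ρ : ℝ)
    (n : ℝ × ℝ) (c : ℝ)
    (O : Set Pt) (hO : IsOpen O)
    (u : Pt → ℝ × ℝ) (v p : Pt → ℝ)
    (hu : ContDiffOn ℝ 1 u O)
    (hmom1 : ∀ q ∈ O,
      ρ * (dT (fun z => (u z).1) q
        + (u q).1 * dX1 (fun z => (u z).1) q + (u q).2 * dX2 (fun z => (u z).1) q
        + v q * dY (fun z => (u z).1) q) + dX1 p q = 0)
    (hmom2 : ∀ q ∈ O,
      ρ * (dT (fun z => (u z).2) q
        + (u q).1 * dX1 (fun z => (u z).2) q + (u q).2 * dX2 (fun z => (u z).2) q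
        + v q * dY (fun z => (u z).2) q) + dX2 p q = 0)
    (S : Set Pt) (hSO : S ⊆ O)
    -- `S` is a relatively open subset of the vertical hyperplane `{x·n = c}`
    (hSrel : ∃ U : Set Pt, IsOpen U ∧
      S = U ∩ {q : Pt | q.1.1 * n.1 + q.1.2 * n.2 = c})
    -- impermeability on the wall
    (himp : ∀ q ∈ S, (u q).1 * n.1 + (u q).2 * n.2 = 0) :
    ∀ q ∈ S, dX1 p q * n.1 + dX2 p q * n.2 = 0 := by
  obtain ⟨U, hU, rfl⟩ := hSrel
  intro q hq
  have hqO : q ∈ O := hSO hq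
  have hu_diff : DifferentiableAt ℝ u q :=
    (hu.contDiffAt (hO.mem_nhds hqO)).differentiableAt one_ne_zero
  have hflux_on_wall : ∀ᶠ z in 𝓝 q, horizontalDot n z = horizontalDot n q →
      (u z).1 * n.1 + (u z).2 * n.2 = 0 :=
    eventually_of_mem (hU.mem_nhds hq.1) fun z hzU hz => himp z ⟨hzU, hz.trans hq.2⟩
  have hflux_deriv : ∀ w, fderiv ℝ (fun z => (u z).1 * n.1 + (u z).2 * n.2) q w
      = fderiv ℝ (fun z => (u z).1) q w * n.1 + fderiv ℝ (fun z => (u z).2) q w * n.2 := by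
    intro w
    have hderiv : HasFDerivAt (fun z => (u z).1 * n.1 + (u z).2 * n.2) _ q :=
      (hu_diff.fst.hasFDerivAt.mul_const n.1).add (hu_diff.snd.hasFDerivAt.mul_const n.2)
    rw [hderiv.fderiv]
    simp [mul_comm]
  have htangent := fderiv_apply_eq_zero_of_eventually_eq_zero_on_level_set hflux_on_wall
    (w := (((u q).1, (u q).2), v q, 1)) (himp q hq)
  rw [hflux_deriv, fderiv_apply_eq_partials, fderiv_apply_eq_partials] at htangent
  linear_combination n.1 * hmom1 q hqO + n.2 * hmom2 q hqO - ρ * htangent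

/-- On a wet portion `S` of a flat vertical wall
`{x·n = c}` (with constant horizontal unit normal `n`), the impermeability
condition `u·n = 0` and the horizontal momentum equation
`ρ(u_t + (u·∇)u + v u_y) + ∇p = 0` imply `∇p·n = 0` on `S`. -/
theorem wall_pressure_normal_derivative
    (ρ : ℝ) (hρ : 0 < ρ)
    (n : ℝ × ℝ) (hn : n.1 ^ 2 + n.2 ^ 2 = 1) (c : ℝ)
    (O : Set Pt) (hO : IsOpen O)
    (u : Pt → ℝ × ℝ) (v p : Pt → ℝ)
    (hu : ContDiffOn ℝ 1 u O) (hv : ContDiffOn ℝ 1 v O) (hp : ContDiffOn ℝ 1 p O)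
    (hmom1 : ∀ q ∈ O,
      ρ * (dT (fun z => (u z).1) q
        + (u q).1 * dX1 (fun z => (u z).1) q + (u q).2 * dX2 (fun z => (u z).1) q
        + v q * dY (fun z => (u z).1) q) + dX1 p q = 0)
    (hmom2 : ∀ q ∈ O,
      ρ * (dT (fun z => (u z).2) q
        + (u q).1 * dX1 (fun z => (u z).2) q + (u q).2 * dX2 (fun z => (u z).2) q
        + v q * dY (fun z => (u z).2) q) + dX2 p q = 0)
    (S : Set Pt) (hSO : S ⊆ O)
    -- `S` is a relatively open subset of the vertical hyperplane `{x·n = c}`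
    (hSrel : ∃ U : Set Pt, IsOpen U ∧
      S = U ∩ {q : Pt | q.1.1 * n.1 + q.1.2 * n.2 = c})
    -- impermeability on the wall
    (himp : ∀ q ∈ S, (u q).1 * n.1 + (u q).2 * n.2 = 0) :
    ∀ q ∈ S, dX1 p q * n.1 + dX2 p q * n.2 = 0 :=
  wall_pressure_normal_derivative_general ρ n c O hO u v p hu hmom1 hmom2 S hSO hSrel himp

end
end

section
/- Let r : ℝ → ℝ² be a C² arc-length parametrization of a plane curve Γ, with unit tangent τ(s) := ṙ(s), unit normal ν(s), and signed curvature κ̊(s) defined by the Frenet relation τ̇(s) = κ̊(s)·ν(s). Let u : O → ℝ², v, p : O → ℝ be C¹ on an open set O ⊆ ℝ²×ℝ×ℝ satisfying the horizontal momentum equation ρ(u_t + (u·∇)u + v u_y) + ∇p = 0, and let S be a relatively open subset of the lateral surface {(r(s), y, t)} contained in O on which the impermeability condition u(r(s),y,t)·ν(s) = 0 holds identically. Then at every point of S the normal pressure derivative satisfies ∂p/∂ν := ∇p·ν = −ρ·u_τ²·κ̊, where u_τ := u·τ is the tangential velocity component. -/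
/-! Since `τ` and `ν` are orthonormal, `ν = ±(-τ₂, τ₁)`, so impermeability says `u = u_τ τ` on the
wall. Differentiating `u · ν = 0` in `t` and `y`, which move along the wall, kills `u_t · ν` and
`u_y · ν` in the normal component of the momentum equation. Differentiating along the curve the
equivalent condition `u · (τ₂, -τ₁) = 0`, which involves `τ̇ = κ̊ ν` but no derivative of `ν`,
gives `((τ · ∇) u) · ν = κ̊ u_τ`, hence `((u · ∇) u) · ν = κ̊ u_τ²`. -/

noncomputable section

open Filter Topology

section PlaneFrame

variable {τ ν : ℝ × ℝ}

theorem exists_normal_eq_sign_mul_rotate (hτ : τ.1 ^ 2 + τ.2 ^ 2 = 1)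
    (hν : ν.1 ^ 2 + ν.2 ^ 2 = 1) (horth : τ.1 * ν.1 + τ.2 * ν.2 = 0) :
    ∃ e : ℝ, e ^ 2 = 1 ∧ ν.1 = -e * τ.2 ∧ ν.2 = e * τ.1 :=
  ⟨τ.1 * ν.2 - τ.2 * ν.1,
    by linear_combination (ν.1 ^ 2 + ν.2 ^ 2) * hτ + hν - (τ.1 * ν.1 + τ.2 * ν.2) * horth,
    by linear_combination τ.1 * horth - ν.1 * hτ,
    by linear_combination τ.2 * horth - ν.2 * hτ⟩

theorem rotate_dot_eq_zero_of_normal_dot_eq_zero (hτ : τ.1 ^ 2 + τ.2 ^ 2 = 1)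
    (hν : ν.1 ^ 2 + ν.2 ^ 2 = 1) (horth : τ.1 * ν.1 + τ.2 * ν.2 = 0) {w : ℝ × ℝ}
    (hw : w.1 * ν.1 + w.2 * ν.2 = 0) : w.1 * τ.2 + w.2 * -τ.1 = 0 := by
  obtain ⟨e, he, hν₁, hν₂⟩ := exists_normal_eq_sign_mul_rotate hτ hν horth
  rw [hν₁, hν₂] at hw
  have hsign : -e * (w.1 * τ.2 + w.2 * -τ.1) = 0 := by linear_combination hw
  exact (mul_eq_zero.mp hsign).resolve_left (by nlinarith)

theorem eq_tangent_dot_mul_of_normal_dot_eq_zero (hτ : τ.1 ^ 2 + τ.2 ^ 2 = 1)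
    (hν : ν.1 ^ 2 + ν.2 ^ 2 = 1) (horth : τ.1 * ν.1 + τ.2 * ν.2 = 0) {w : ℝ × ℝ}
    (hw : w.1 * ν.1 + w.2 * ν.2 = 0) :
    w.1 = (w.1 * τ.1 + w.2 * τ.2) * τ.1 ∧ w.2 = (w.1 * τ.1 + w.2 * τ.2) * τ.2 := by
  have hrot := rotate_dot_eq_zero_of_normal_dot_eq_zero hτ hν horth hw
  constructor
  · linear_combination -w.1 * hτ + τ.2 * hrot
  · linear_combination -w.2 * hτ - τ.1 * hrot

/-- `a` and `b` play the horizontal gradients of the two velocity components; `hderiv` is the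
derivative along the wall of `u · (τ₂, -τ₁) = 0`, with `κ ν` the derivative of `τ`. -/
theorem convective_normal_eq_curvature_mul_sq_of_tangential_deriv (hτ : τ.1 ^ 2 + τ.2 ^ 2 = 1)
    (hν : ν.1 ^ 2 + ν.2 ^ 2 = 1) (horth : τ.1 * ν.1 + τ.2 * ν.2 = 0) {u a b : ℝ × ℝ} {κ : ℝ}
    (hu : u.1 * ν.1 + u.2 * ν.2 = 0)
    (hderiv : (τ.1 * a.1 + τ.2 * a.2) * τ.2 + (τ.1 * b.1 + τ.2 * b.2) * -τ.1
      + (u.1 * (κ * ν.2) + u.2 * -(κ * ν.1)) = 0) :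
    (u.1 * a.1 + u.2 * a.2) * ν.1 + (u.1 * b.1 + u.2 * b.2) * ν.2
      = κ * (u.1 * τ.1 + u.2 * τ.2) ^ 2 := by
  obtain ⟨e, he, hν₁, hν₂⟩ := exists_normal_eq_sign_mul_rotate hτ hν horth
  obtain ⟨hu₁, hu₂⟩ := eq_tangent_dot_mul_of_normal_dot_eq_zero hτ hν horth hu
  set c := u.1 * τ.1 + u.2 * τ.2
  rw [hν₁, hν₂, hu₁, hu₂] at hderiv ⊢
  linear_combination -c * e * hderiv + κ * c ^ 2 * e ^ 2 * hτ + κ * c ^ 2 * he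

end PlaneFrame

theorem HasDerivAt.eq_zero_of_eventually_eq_zero {f : ℝ → ℝ} {f' x : ℝ}
    (hf : HasDerivAt f f' x) (h : ∀ᶠ x' in 𝓝 x, f x' = 0) : f' = 0 :=
  (hf.congr_of_eventuallyEq (h.mono fun _ hx' => hx'.symm)).unique (hasDerivAt_const x 0)

theorem fderiv_dot_add_dot_eq_zero_of_eventually_dot_eq_zero {E : Type*}
    [NormedAddCommGroup E] [NormedSpace ℝ E] {u : E → ℝ × ℝ} {g : ℝ → E} {n : ℝ → ℝ × ℝ}
    {d : E} {n' : ℝ × ℝ} {a : ℝ} (hu : DifferentiableAt ℝ u (g a)) (hg : HasDerivAt g d a)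
    (hn : HasDerivAt n n' a)
    (h : ∀ᶠ a' in 𝓝 a, (u (g a')).1 * (n a').1 + (u (g a')).2 * (n a').2 = 0) :
    fderiv ℝ (fun z => (u z).1) (g a) d * (n a).1 + fderiv ℝ (fun z => (u z).2) (g a) d * (n a).2
      + ((u (g a)).1 * n'.1 + (u (g a)).2 * n'.2) = 0 := by
  have hu₁ : HasDerivAt (fun a' => (u (g a')).1) (fderiv ℝ (fun z => (u z).1) (g a) d) a :=
    hu.fst.hasFDerivAt.comp_hasDerivAt a hg
  have hu₂ : HasDerivAt (fun a' => (u (g a')).2) (fderiv ℝ (fun z => (u z).2) (g a) d) a :=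
    hu.snd.hasFDerivAt.comp_hasDerivAt a hg
  have hn₁ : HasDerivAt (fun a' => (n a').1) n'.1 a :=
    (ContinuousLinearMap.fst ℝ ℝ ℝ).hasFDerivAt.comp_hasDerivAt a hn
  have hn₂ : HasDerivAt (fun a' => (n a').2) n'.2 a :=
    (ContinuousLinearMap.snd ℝ ℝ ℝ).hasFDerivAt.comp_hasDerivAt a hn
  linear_combination ((hu₁.mul hn₁).add (hu₂.mul hn₂)).eq_zero_of_eventually_eq_zero h

theorem fderiv_dot_eq_zero_of_eventually_dot_eq_zero {E : Type*}
    [NormedAddCommGroup E] [NormedSpace ℝ E] {u : E → ℝ × ℝ} {g : ℝ → E} {n : ℝ × ℝ}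
    {d : E} {a : ℝ} (hu : DifferentiableAt ℝ u (g a)) (hg : HasDerivAt g d a)
    (h : ∀ᶠ a' in 𝓝 a, (u (g a')).1 * n.1 + (u (g a')).2 * n.2 = 0) :
    fderiv ℝ (fun z => (u z).1) (g a) d * n.1 + fderiv ℝ (fun z => (u z).2) (g a) d * n.2
      = 0 := by
  simpa using fderiv_dot_add_dot_eq_zero_of_eventually_dot_eq_zero hu hg (hasDerivAt_const a n) h

theorem fderiv_apply_horizontal (f : Pt → ℝ) (q : Pt) (w : ℝ × ℝ) :
    fderiv ℝ f q ((w, 0) : Pt) = w.1 * dX1 f q + w.2 * dX2 f q := by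
  have hw : ((w, 0) : Pt) = w.1 • ((((1 : ℝ), (0 : ℝ)), (0 : ℝ), (0 : ℝ)) : Pt)
      + w.2 • ((((0 : ℝ), (1 : ℝ)), (0 : ℝ), (0 : ℝ)) : Pt) := by
    simp [Prod.ext_iff]
  rw [hw, map_add, map_smul, map_smul, smul_eq_mul, smul_eq_mul, dX1, dX2]

theorem dT_dot_eq_zero_and_dY_dot_eq_zero {u : Pt → ℝ × ℝ} {n x : ℝ × ℝ} {y t : ℝ}
    {V : Set Pt} (hV : V ∈ 𝓝 ((x, y, t) : Pt)) (hu : DifferentiableAt ℝ u (x, y, t))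
    (h : ∀ y' t', ((x, y', t') : Pt) ∈ V →
      (u (x, y', t')).1 * n.1 + (u (x, y', t')).2 * n.2 = 0) :
    dT (fun z => (u z).1) (x, y, t) * n.1 + dT (fun z => (u z).2) (x, y, t) * n.2 = 0 ∧
      dY (fun z => (u z).1) (x, y, t) * n.1 + dY (fun z => (u z).2) (x, y, t) * n.2 = 0 := by
  constructor
  · refine fderiv_dot_eq_zero_of_eventually_dot_eq_zero (g := fun t' => ((x, y, t') : Pt)) hu
      ((hasDerivAt_const _ _).prodMk ((hasDerivAt_const _ _).prodMk (hasDerivAt_id t))) ?_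
    have hline : Continuous fun t' => ((x, y, t') : Pt) := by fun_prop
    filter_upwards [hline.continuousAt.preimage_mem_nhds hV] with t' ht' using h y t' ht'
  · refine fderiv_dot_eq_zero_of_eventually_dot_eq_zero (g := fun y' => ((x, y', t) : Pt)) hu
      ((hasDerivAt_const _ _).prodMk ((hasDerivAt_id y).prodMk (hasDerivAt_const _ _))) ?_
    have hline : Continuous fun y' => ((x, y', t) : Pt) := by fun_prop
    filter_upwards [hline.continuousAt.preimage_mem_nhds hV] with y' hy' using h y' t hy'

theorem wall_convective_normal_eq_curvature_mul_sq {r ν : ℝ → ℝ × ℝ} {κ : ℝ}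
    {u : Pt → ℝ × ℝ} {s y t : ℝ} {V : Set Pt}
    (harc : ∀ s, (deriv r s).1 ^ 2 + (deriv r s).2 ^ 2 = 1)
    (hν_unit : ∀ s, (ν s).1 ^ 2 + (ν s).2 ^ 2 = 1)
    (hν_orth : ∀ s, (deriv r s).1 * (ν s).1 + (deriv r s).2 * (ν s).2 = 0)
    (hr : DifferentiableAt ℝ r s) (hτ : HasDerivAt (deriv r) (κ • ν s) s)
    (hV : V ∈ 𝓝 ((r s, y, t) : Pt)) (hu : DifferentiableAt ℝ u (r s, y, t))
    (h : ∀ s', ((r s', y, t) : Pt) ∈ V →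
      (u (r s', y, t)).1 * (ν s').1 + (u (r s', y, t)).2 * (ν s').2 = 0) :
    ((u (r s, y, t)).1 * dX1 (fun z => (u z).1) (r s, y, t)
        + (u (r s, y, t)).2 * dX2 (fun z => (u z).1) (r s, y, t)) * (ν s).1
      + ((u (r s, y, t)).1 * dX1 (fun z => (u z).2) (r s, y, t)
        + (u (r s, y, t)).2 * dX2 (fun z => (u z).2) (r s, y, t)) * (ν s).2
      = κ * ((u (r s, y, t)).1 * (deriv r s).1 + (u (r s, y, t)).2 * (deriv r s).2) ^ 2 := by
  have hn : HasDerivAt (fun s' => ((deriv r s').2, -(deriv r s').1))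
      (κ * (ν s).2, -(κ * (ν s).1)) s :=
    ((ContinuousLinearMap.snd ℝ ℝ ℝ).hasFDerivAt.comp_hasDerivAt s hτ).prodMk
      ((ContinuousLinearMap.fst ℝ ℝ ℝ).hasFDerivAt.comp_hasDerivAt s hτ).neg
  have hcurve : HasDerivAt (fun s' => ((r s', y, t) : Pt)) (deriv r s, 0) s :=
    hr.hasDerivAt.prodMk (hasDerivAt_const _ _)
  have hwall : ∀ᶠ s' in 𝓝 s,
      (u (r s', y, t)).1 * (deriv r s').2 + (u (r s', y, t)).2 * -(deriv r s').1 = 0 := by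
    filter_upwards [hcurve.continuousAt.preimage_mem_nhds hV] with s' hs'
    exact rotate_dot_eq_zero_of_normal_dot_eq_zero (harc s') (hν_unit s') (hν_orth s') (h s' hs')
  have hds := fderiv_dot_add_dot_eq_zero_of_eventually_dot_eq_zero hu hcurve hn hwall
  rw [fderiv_apply_horizontal, fderiv_apply_horizontal] at hds
  exact convective_normal_eq_curvature_mul_sq_of_tangential_deriv (harc s) (hν_unit s) (hν_orth s)
    (a := (dX1 (fun z => (u z).1) (r s, y, t), dX2 (fun z => (u z).1) (r s, y, t)))
    (b := (dX1 (fun z => (u z).2) (r s, y, t), dX2 (fun z => (u z).2) (r s, y, t)))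
    (h s (mem_of_mem_nhds hV)) (by linear_combination hds)

theorem curved_wall_pressure_normal_derivative_general
    (ρ : ℝ)
    (r : ℝ → ℝ × ℝ) (ν : ℝ → ℝ × ℝ) (κ : ℝ → ℝ)
    (hr : ContDiff ℝ 2 r)
    -- arc-length parametrization: `τ := ṙ` is a unit vector
    (harc : ∀ s, (deriv r s).1 ^ 2 + (deriv r s).2 ^ 2 = 1)
    -- `ν` is a unit normal field
    (hν_unit : ∀ s, (ν s).1 ^ 2 + (ν s).2 ^ 2 = 1)
    (hν_orth : ∀ s, (deriv r s).1 * (ν s).1 + (deriv r s).2 * (ν s).2 = 0)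
    -- Frenet relation `τ̇ = κ̊ ν`
    (hFrenet : ∀ s, deriv (fun s' => deriv r s') s = κ s • ν s)
    (O : Set Pt) (hO : IsOpen O)
    (u : Pt → ℝ × ℝ) (v p : Pt → ℝ)
    (hu : ContDiffOn ℝ 1 u O)
    (hmom1 : ∀ q ∈ O,
      ρ * (dT (fun z => (u z).1) q
        + (u q).1 * dX1 (fun z => (u z).1) q + (u q).2 * dX2 (fun z => (u z).1) q
        + v q * dY (fun z => (u z).1) q) + dX1 p q = 0)
    (hmom2 : ∀ q ∈ O,
      ρ * (dT (fun z => (u z).2) q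
        + (u q).1 * dX1 (fun z => (u z).2) q + (u q).2 * dX2 (fun z => (u z).2) q
        + v q * dY (fun z => (u z).2) q) + dX2 p q = 0)
    (S : Set Pt) (hSO : S ⊆ O)
    -- `S` is a relatively open subset of the lateral surface over the curve
    (hSrel : ∃ U : Set Pt, IsOpen U ∧
      S = U ∩ {q : Pt | ∃ s : ℝ, q.1 = r s})
    -- impermeability on the wet lateral wall
    (himp : ∀ s y t, ((r s, y, t) : Pt) ∈ S →
      (u (r s, y, t)).1 * (ν s).1 + (u (r s, y, t)).2 * (ν s).2 = 0) :
    ∀ s y t, ((r s, y, t) : Pt) ∈ S →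
      dX1 p (r s, y, t) * (ν s).1 + dX2 p (r s, y, t) * (ν s).2 =
        -(ρ * ((u (r s, y, t)).1 * (deriv r s).1
              + (u (r s, y, t)).2 * (deriv r s).2) ^ 2 * κ s) := by
  intro s y t hq
  obtain ⟨U, hU, rfl⟩ := hSrel
  have hu_q : DifferentiableAt ℝ u (r s, y, t) :=
    (hu.differentiableOn one_ne_zero).differentiableAt (hO.mem_nhds (hSO hq))
  obtain ⟨hdT, hdY⟩ := dT_dot_eq_zero_and_dY_dot_eq_zero (hU.mem_nhds hq.1) hu_q
    fun y' t' h => himp s y' t' ⟨h, s, rfl⟩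
  have hτ : HasDerivAt (deriv r) (κ s • ν s) s := hFrenet s ▸
    ((contDiff_succ_iff_deriv.mp hr).2.2.differentiable one_ne_zero s).hasDerivAt
  have hconv := wall_convective_normal_eq_curvature_mul_sq harc hν_unit hν_orth
    (hr.differentiable (by norm_num) s) hτ (hU.mem_nhds hq.1) hu_q
    fun s' h => himp s' y t ⟨h, s', rfl⟩
  linear_combination (ν s).1 * hmom1 _ (hSO hq) + (ν s).2 * hmom2 _ (hSO hq) - ρ * hdT
    - ρ * v (r s, y, t) * hdY - ρ * hconv

/-- Along the wet part of a vertical cylindrical wall over a C²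
arc-length parametrized plane curve `r` with unit tangent `τ = ṙ`, unit normal
`ν` and signed curvature `κ̊` (Frenet: `τ̇ = κ̊ ν`), the horizontal momentum
equation together with the impermeability condition `u·ν = 0` imply
`∂p/∂ν = −ρ u_τ² κ̊`, where `u_τ = u·τ`. -/
theorem curved_wall_pressure_normal_derivative
    (ρ : ℝ) (hρ : 0 < ρ)
    (r : ℝ → ℝ × ℝ) (ν : ℝ → ℝ × ℝ) (κ : ℝ → ℝ)
    (hr : ContDiff ℝ 2 r)
    -- arc-length parametrization: `τ := ṙ` is a unit vector
    (harc : ∀ s, (deriv r s).1 ^ 2 + (deriv r s).2 ^ 2 = 1)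
    -- `ν` is a unit normal field
    (hν_unit : ∀ s, (ν s).1 ^ 2 + (ν s).2 ^ 2 = 1)
    (hν_orth : ∀ s, (deriv r s).1 * (ν s).1 + (deriv r s).2 * (ν s).2 = 0)
    -- Frenet relation `τ̇ = κ̊ ν`
    (hFrenet : ∀ s, deriv (fun s' => deriv r s') s = κ s • ν s)
    (O : Set Pt) (hO : IsOpen O)
    (u : Pt → ℝ × ℝ) (v p : Pt → ℝ)
    (hu : ContDiffOn ℝ 1 u O) (hv : ContDiffOn ℝ 1 v O) (hp : ContDiffOn ℝ 1 p O)
    (hmom1 : ∀ q ∈ O,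
      ρ * (dT (fun z => (u z).1) q
        + (u q).1 * dX1 (fun z => (u z).1) q + (u q).2 * dX2 (fun z => (u z).1) q
        + v q * dY (fun z => (u z).1) q) + dX1 p q = 0)
    (hmom2 : ∀ q ∈ O,
      ρ * (dT (fun z => (u z).2) q
        + (u q).1 * dX1 (fun z => (u z).2) q + (u q).2 * dX2 (fun z => (u z).2) q
        + v q * dY (fun z => (u z).2) q) + dX2 p q = 0)
    (S : Set Pt) (hSO : S ⊆ O)
    -- `S` is a relatively open subset of the lateral surface over the curve
    (hSrel : ∃ U : Set Pt, IsOpen U ∧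
      S = U ∩ {q : Pt | ∃ s : ℝ, q.1 = r s})
    -- impermeability on the wet lateral wall
    (himp : ∀ s y t, ((r s, y, t) : Pt) ∈ S →
      (u (r s, y, t)).1 * (ν s).1 + (u (r s, y, t)).2 * (ν s).2 = 0) :
    ∀ s y t, ((r s, y, t) : Pt) ∈ S →
      dX1 p (r s, y, t) * (ν s).1 + dX2 p (r s, y, t) * (ν s).2 =
        -(ρ * ((u (r s, y, t)).1 * (deriv r s).1
              + (u (r s, y, t)).2 * (deriv r s).2) ^ 2 * κ s) :=
  curved_wall_pressure_normal_derivative_general ρ r ν κ hr harc hν_unit hν_orth hFrenet O hO u v p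
    hu hmom1 hmom2 S hSO hSrel himp

end
end

section
/- Assume the inner-domain SGN system holds: h, d : D×I → ℝ are prescribed C³ functions with Q := d + h > 0, u̲ : D×I → ℝ² is C², and the mass equation Q_t + div(Q u̲) = 0 and the momentum equation u̲_t + (u̲·∇)u̲ + ∇P/(ρQ) = (p̌ ∇h + p̂ ∇d)/(ρQ) hold, where R₁ := D(div u̲) − (div u̲)², R₂ := D²h, and the pressure fields are related by P = p̌ Q − ρgQ²/2 + ρ(Q³R₁/6 + Q²R₂/2) and p̂ = p̌ − ρgQ + ρ(Q²R₁/2 + Q R₂). Define the total energy density ℰ by ℰ/ρ := |u̲|²/2 + (Q²/6)(div u̲)² + (Q/2)(div u̲)·Dh + (Dh)²/2 + g(Q − 2h)/2. Then the total energy balance holds at every point: (Qℰ)_t + div((Qℰ + P)u̲) = −p̌ h_t − p̂ d_t. In particular, if h and d are time-independent this is a local conservation law. -/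
/-! With `Q = d + h`, `w = div u̲` and `D` the material derivative, the mass equation reads
`DQ = -Q w`, so the flux form `(Qℰ)_t + div((Qℰ + P)u̲)` equals `Q Dℰ + u̲·∇P + P w`. The
momentum equation replaces `u̲·∇P` by `p̌ u̲·∇h + p̂ u̲·∇d − ρQ u̲·Du̲`, which cancels the horizontal
kinetic part of `Q Dℰ` and leaves `−p̌ h_t − p̂ d_t` plus
`ρQ D(ℰ/ρ − |u̲|²/2) + p̌ Dh + p̂ Dd + P w`. Once the pressure relations are inserted, this
remainder is linear in `Dd` and is a multiple of `Dd + Dh + Q w`, which vanishes by mass. -/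

noncomputable section

/-- Horizontal space-time points `((x₁,x₂), t)`. -/
abbrev Qt : Type := (ℝ × ℝ) × ℝ

/-- Partial derivative `∂_{x₁}`. -/
noncomputable def pX1 (f : Qt → ℝ) (q : Qt) : ℝ :=
  fderiv ℝ f q (((1 : ℝ), (0 : ℝ)), (0 : ℝ))

/-- Partial derivative `∂_{x₂}`. -/
noncomputable def pX2 (f : Qt → ℝ) (q : Qt) : ℝ :=
  fderiv ℝ f q (((0 : ℝ), (1 : ℝ)), (0 : ℝ))

/-- Partial derivative `∂_t`. -/
noncomputable def pT (f : Qt → ℝ) (q : Qt) : ℝ :=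
  fderiv ℝ f q (((0 : ℝ), (0 : ℝ)), (1 : ℝ))

/-- Horizontal divergence of a plane vector field. -/
noncomputable def divV (w : Qt → ℝ × ℝ) (q : Qt) : ℝ :=
  pX1 (fun z => (w z).1) q + pX2 (fun z => (w z).2) q

/-- Material derivative `Df := f_t + u·∇f`. -/
noncomputable def matD (u : Qt → ℝ × ℝ) (f : Qt → ℝ) (q : Qt) : ℝ :=
  pT f q + (u q).1 * pX1 f q + (u q).2 * pX2 f q

/-- Acceleration term `R₁ := D(div u) − (div u)²` of the inner SGN model. -/
noncomputable def accR1 (u : Qt → ℝ × ℝ) (q : Qt) : ℝ :=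
  matD u (divV u) q - (divV u q) ^ 2

/-- Acceleration term `R₂ := D²h` of the inner SGN model. -/
noncomputable def accR2 (u : Qt → ℝ × ℝ) (h : Qt → ℝ) (q : Qt) : ℝ :=
  matD u (fun z => matD u h z) q

/-- Inner SGN total energy density `ℰ`. -/
noncomputable def innerE (ρ g : ℝ) (u : Qt → ℝ × ℝ) (h d : Qt → ℝ) (q : Qt) : ℝ :=
  ρ * (((u q).1 ^ 2 + (u q).2 ^ 2) / 2
    + (d q + h q) ^ 2 / 6 * (divV u q) ^ 2
    + (d q + h q) / 2 * (divV u q) * matD u h q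
    + (matD u h q) ^ 2 / 2
    + g * ((d q + h q) - 2 * h q) / 2)

theorem ContDiffAt.differentiableAt_fderiv_apply {𝕜 E F : Type*} [NontriviallyNormedField 𝕜]
    [NormedAddCommGroup E] [NormedSpace 𝕜 E] [NormedAddCommGroup F] [NormedSpace 𝕜 F]
    {n : WithTop ℕ∞} {f : E → F} {x : E} (hf : ContDiffAt 𝕜 n f x) (hn : 2 ≤ n) (v : E) :
    DifferentiableAt 𝕜 (fun z => fderiv 𝕜 f z v) x :=
  ((hf.fderiv_right (m := 1) hn).clm_apply contDiffAt_const).differentiableAt one_ne_zero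

section MaterialDerivative

variable {u : Qt → ℝ × ℝ} {f k : Qt → ℝ} {q : Qt}

theorem differentiableAt_divV (hu : ContDiffAt ℝ 2 u q) : DifferentiableAt ℝ (divV u) q :=
  (hu.fst.differentiableAt_fderiv_apply le_rfl _).add
    (hu.snd.differentiableAt_fderiv_apply le_rfl _)

theorem differentiableAt_matD (hu : DifferentiableAt ℝ u q) (hf : ContDiffAt ℝ 2 f q) :
    DifferentiableAt ℝ (matD u f) q :=
  ((hf.differentiableAt_fderiv_apply le_rfl _).add
    (hu.fst.mul (hf.differentiableAt_fderiv_apply le_rfl _))).add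
    (hu.snd.mul (hf.differentiableAt_fderiv_apply le_rfl _))

theorem matD_const (c : ℝ) : matD u (fun _ => c) q = 0 := by
  simp [matD, pT, pX1, pX2]

theorem matD_add (hf : DifferentiableAt ℝ f q) (hk : DifferentiableAt ℝ k q) :
    matD u (fun z => f z + k z) q = matD u f q + matD u k q := by
  simp only [matD, pT, pX1, pX2, fderiv_fun_add hf hk, add_apply]
  ring

theorem matD_sub (hf : DifferentiableAt ℝ f q) (hk : DifferentiableAt ℝ k q) :
    matD u (fun z => f z - k z) q = matD u f q - matD u k q := by
  simp only [matD, pT, pX1, pX2, fderiv_fun_sub hf hk, sub_apply]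
  ring

theorem matD_mul (hf : DifferentiableAt ℝ f q) (hk : DifferentiableAt ℝ k q) :
    matD u (fun z => f z * k z) q = matD u f q * k q + f q * matD u k q := by
  simp only [matD, pT, pX1, pX2, fderiv_fun_mul hf hk, add_apply,
    smul_apply, smul_eq_mul]
  ring

theorem matD_const_mul (c : ℝ) (hf : DifferentiableAt ℝ f q) :
    matD u (fun z => c * f z) q = c * matD u f q := by
  simp only [matD, pT, pX1, pX2, fderiv_const_mul hf, smul_apply, smul_eq_mul]
  ring

theorem matD_div_const (c : ℝ) (hf : DifferentiableAt ℝ f q) :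
    matD u (fun z => f z / c) q = matD u f q / c := by
  simp only [div_eq_mul_inv, mul_comm _ c⁻¹, matD_const_mul c⁻¹ hf]

theorem matD_pow (n : ℕ) (hf : DifferentiableAt ℝ f q) :
    matD u (fun z => f z ^ n) q = n * f q ^ (n - 1) * matD u f q := by
  simp only [matD, pT, pX1, pX2, fderiv_fun_pow n hf, smul_apply, smul_eq_mul]
  ring

end MaterialDerivative

section Transport

variable {u : Qt → ℝ × ℝ} {F Q f P : Qt → ℝ} {q : Qt}

theorem pX1_mul_add_pX2_mul (hF : DifferentiableAt ℝ F q) (hu : DifferentiableAt ℝ u q) :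
    pX1 (fun z => F z * (u z).1) q + pX2 (fun z => F z * (u z).2) q =
      (u q).1 * pX1 F q + (u q).2 * pX2 F q + F q * divV u q := by
  simp only [pX1, pX2, divV, fderiv_fun_mul hF hu.fst, fderiv_fun_mul hF hu.snd, add_apply,
    smul_apply, smul_eq_mul]
  ring

theorem matD_add_mul_divV_eq_zero (hQ : DifferentiableAt ℝ Q q) (hu : DifferentiableAt ℝ u q)
    (hmass : pT Q q + pX1 (fun z => Q z * (u z).1) q + pX2 (fun z => Q z * (u z).2) q = 0) :
    matD u Q q + Q q * divV u q = 0 := by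
  rw [add_assoc, pX1_mul_add_pX2_mul hQ hu] at hmass
  rw [← hmass, matD]
  ring

theorem pT_mul_add_flux_eq (hQ : DifferentiableAt ℝ Q q) (hf : DifferentiableAt ℝ f q)
    (hP : DifferentiableAt ℝ P q) (hu : DifferentiableAt ℝ u q)
    (hmass : pT Q q + pX1 (fun z => Q z * (u z).1) q + pX2 (fun z => Q z * (u z).2) q = 0) :
    pT (fun z => Q z * f z) q + pX1 (fun z => (Q z * f z + P z) * (u z).1) q
        + pX2 (fun z => (Q z * f z + P z) * (u z).2) q =
      Q q * matD u f q + (u q).1 * pX1 P q + (u q).2 * pX2 P q + P q * divV u q := by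
  have hQf : DifferentiableAt ℝ (fun z => Q z * f z) q := hQ.mul hf
  have hmass' := matD_add_mul_divV_eq_zero hQ hu hmass
  rw [add_assoc, pX1_mul_add_pX2_mul (F := fun z => Q z * f z + P z) (hQf.add hP) hu]
  simp only [matD, pT, pX1, pX2, fderiv_fun_add hQf hP, fderiv_fun_mul hQ hf, add_apply,
    smul_apply, smul_eq_mul] at hmass' ⊢
  linear_combination f q * hmass'

end Transport

theorem matD_innerE {ρ g : ℝ} {u : Qt → ℝ × ℝ} {h d : Qt → ℝ} {q : Qt}
    (hu : DifferentiableAt ℝ u q) (hh : DifferentiableAt ℝ h q) (hd : DifferentiableAt ℝ d q)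
    (hw : DifferentiableAt ℝ (divV u) q) (hδ : DifferentiableAt ℝ (matD u h) q) :
    matD u (innerE ρ g u h d) q =
      ρ * ((u q).1 * matD u (fun z => (u z).1) q + (u q).2 * matD u (fun z => (u z).2) q
        + (d q + h q) * divV u q ^ 2 / 3 * (matD u d q + matD u h q)
        + (d q + h q) ^ 2 / 3 * divV u q * matD u (divV u) q
        + ((matD u d q + matD u h q) * divV u q * matD u h q
          + (d q + h q) * matD u (divV u) q * matD u h q
          + (d q + h q) * divV u q * matD u (matD u h) q) / 2
        + matD u h q * matD u (matD u h) q
        + g * (matD u d q - matD u h q) / 2) := by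
  unfold innerE
  simp (disch := fun_prop) only [matD_add, matD_sub, matD_mul, matD_const, matD_div_const,
    matD_pow]
  push_cast
  ring

/-- The left side is `ρQ D(ℰ/ρ − |u̲|²/2) + p̌ Dh + p̂ Dd + P w` with `δ = Dh`, `D w = R₁ + w²`,
`D δ = R₂` and `DQ = Dd + δ`. -/
theorem sgn_pressure_work {ρ g Q w δ Dd R₁ R₂ pc ph P : ℝ} (hmass : Dd + δ + Q * w = 0)
    (hP : P = pc * Q - ρ * g * Q ^ 2 / 2 + ρ * (Q ^ 3 * R₁ / 6 + Q ^ 2 * R₂ / 2))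
    (hph : ph = pc - ρ * g * Q + ρ * (Q ^ 2 * R₁ / 2 + Q * R₂)) :
    ρ * Q * (Q * w ^ 2 / 3 * (Dd + δ) + Q ^ 2 / 3 * w * (R₁ + w ^ 2)
        + ((Dd + δ) * w * δ + Q * (R₁ + w ^ 2) * δ + Q * w * R₂) / 2 + δ * R₂ + g * (Dd - δ) / 2)
      + pc * δ + ph * Dd + P * w = 0 := by
  subst hP hph
  linear_combination (ρ * Q * (Q * w ^ 2 / 3 + w * δ / 2 + g / 2)
    + pc - ρ * g * Q + ρ * (Q ^ 2 * R₁ / 2 + Q * R₂)) * hmass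

theorem mul_add_eq_of_add_div_eq {a b c e : ℝ} (hc : c ≠ 0) (h : a + b / c = e / c) :
    c * a + b = e := by
  field_simp at h
  linarith

theorem sgn_inner_energy_balance_general
    (ρ g : ℝ) (hρ : 0 < ρ)
    (D : Set (ℝ × ℝ)) (hD : IsOpen D)
    (I : Set ℝ) (hIopen : IsOpen I)
    (h d : Qt → ℝ) (u : Qt → ℝ × ℝ) (P pc ph : Qt → ℝ)
    (hh : ContDiffOn ℝ 3 h (D ×ˢ I)) (hd : ContDiffOn ℝ 3 d (D ×ˢ I))
    (hu : ContDiffOn ℝ 2 u (D ×ˢ I)) (hP : ContDiffOn ℝ 1 P (D ×ˢ I))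
    (hQpos : ∀ q ∈ D ×ˢ I, 0 < d q + h q)
    -- pressure relations `P = p̌Q − ρgQ²/2 + ρ(Q³R₁/6 + Q²R₂/2)`
    (hPrel : ∀ q ∈ D ×ˢ I,
      P q = pc q * (d q + h q) - ρ * g * (d q + h q) ^ 2 / 2
        + ρ * ((d q + h q) ^ 3 * accR1 u q / 6
             + (d q + h q) ^ 2 * accR2 u h q / 2))
    -- and `p̂ = p̌ − ρgQ + ρ(Q²R₁/2 + QR₂)`
    (hphrel : ∀ q ∈ D ×ˢ I,
      ph q = pc q - ρ * g * (d q + h q)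
        + ρ * ((d q + h q) ^ 2 * accR1 u q / 2 + (d q + h q) * accR2 u h q))
    -- mass equation `Q_t + div(Q u̲) = 0`
    (hmass : ∀ q ∈ D ×ˢ I,
      pT (fun z => d z + h z) q
        + pX1 (fun z => (d z + h z) * (u z).1) q
        + pX2 (fun z => (d z + h z) * (u z).2) q = 0)
    -- momentum equation `u̲_t + (u̲·∇)u̲ + ∇P/(ρQ) = (p̌∇h + p̂∇d)/(ρQ)`
    (hmom1 : ∀ q ∈ D ×ˢ I,
      matD u (fun z => (u z).1) q + pX1 P q / (ρ * (d q + h q)) =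
        (pc q * pX1 h q + ph q * pX1 d q) / (ρ * (d q + h q)))
    (hmom2 : ∀ q ∈ D ×ˢ I,
      matD u (fun z => (u z).2) q + pX2 P q / (ρ * (d q + h q)) =
        (pc q * pX2 h q + ph q * pX2 d q) / (ρ * (d q + h q))) :
    (∀ q ∈ D ×ˢ I,
      pT (fun z => (d z + h z) * innerE ρ g u h d z) q
        + pX1 (fun z => ((d z + h z) * innerE ρ g u h d z + P z) * (u z).1) q
        + pX2 (fun z => ((d z + h z) * innerE ρ g u h d z + P z) * (u z).2) q =
        -(pc q * pT h q) - ph q * pT d q)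
    ∧ ((∀ q ∈ D ×ˢ I, pT h q = 0) → (∀ q ∈ D ×ˢ I, pT d q = 0) →
      ∀ q ∈ D ×ˢ I,
        pT (fun z => (d z + h z) * innerE ρ g u h d z) q
          + pX1 (fun z => ((d z + h z) * innerE ρ g u h d z + P z) * (u z).1) q
          + pX2 (fun z => ((d z + h z) * innerE ρ g u h d z + P z) * (u z).2) q = 0) := by
  have balance : ∀ q ∈ D ×ˢ I,
      pT (fun z => (d z + h z) * innerE ρ g u h d z) q
        + pX1 (fun z => ((d z + h z) * innerE ρ g u h d z + P z) * (u z).1) q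
        + pX2 (fun z => ((d z + h z) * innerE ρ g u h d z + P z) * (u z).2) q =
        -(pc q * pT h q) - ph q * pT d q := by
    intro q hq
    have hnhds : D ×ˢ I ∈ nhds q := (hD.prod hIopen).mem_nhds hq
    have ch : ContDiffAt ℝ 2 h q := (hh.contDiffAt hnhds).of_le (by norm_num)
    have cu : ContDiffAt ℝ 2 u q := hu.contDiffAt hnhds
    have dh : DifferentiableAt ℝ h q := ch.differentiableAt (by norm_num)
    have dd : DifferentiableAt ℝ d q := (hd.contDiffAt hnhds).differentiableAt (by norm_num)
    have du : DifferentiableAt ℝ u q := cu.differentiableAt (by norm_num)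
    have dP : DifferentiableAt ℝ P q := (hP.contDiffAt hnhds).differentiableAt (by norm_num)
    have dw := differentiableAt_divV cu
    have dδ := differentiableAt_matD du ch
    have dE : DifferentiableAt ℝ (innerE ρ g u h d) q := by unfold innerE; fun_prop
    have hρQ : ρ * (d q + h q) ≠ 0 := (mul_pos hρ (hQpos q hq)).ne'
    have mom1 := mul_add_eq_of_add_div_eq hρQ (hmom1 q hq)
    have mom2 := mul_add_eq_of_add_div_eq hρQ (hmom2 q hq)
    have mass := matD_add_mul_divV_eq_zero (Q := fun z => d z + h z) (dd.add dh) du (hmass q hq)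
    rw [matD_add dd dh] at mass
    have work := sgn_pressure_work mass (hPrel q hq) (hphrel q hq)
    have hR₁ : matD u (divV u) q = accR1 u q + divV u q ^ 2 := by rw [accR1]; ring
    have hR₂ : matD u (matD u h) q = accR2 u h q := rfl
    have hDh : matD u h q = pT h q + (u q).1 * pX1 h q + (u q).2 * pX2 h q := rfl
    have hDd : matD u d q = pT d q + (u q).1 * pX1 d q + (u q).2 * pX2 d q := rfl
    rw [pT_mul_add_flux_eq (Q := fun z => d z + h z) (dd.add dh) dE dP du (hmass q hq),
      matD_innerE du dh dd dw dδ, hR₁, hR₂]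
    linear_combination work + (u q).1 * mom1 + (u q).2 * mom2 - pc q * hDh - ph q * hDd
  refine ⟨balance, fun hht hdt q hq => ?_⟩
  rw [balance q hq, hht q hq, hdt q hq]
  ring

/-- Total-energy balance of the inner-domain SGN model: under
the mass and momentum equations with the SGN pressure relations, the energy
density `ℰ` satisfies `(Qℰ)_t + div((Qℰ + P)u̲) = −p̌ h_t − p̂ d_t`; in
particular, for time-independent `h` and `d` this is a local conservation law. -/
theorem sgn_inner_energy_balance
    (ρ g : ℝ) (hρ : 0 < ρ)
    (D : Set (ℝ × ℝ)) (hD : IsOpen D)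
    (I : Set ℝ) (hIopen : IsOpen I) (hIord : I.OrdConnected)
    (h d : Qt → ℝ) (u : Qt → ℝ × ℝ) (P pc ph : Qt → ℝ)
    (hh : ContDiffOn ℝ 3 h (D ×ˢ I)) (hd : ContDiffOn ℝ 3 d (D ×ˢ I))
    (hu : ContDiffOn ℝ 2 u (D ×ˢ I)) (hP : ContDiffOn ℝ 1 P (D ×ˢ I))
    (hQpos : ∀ q ∈ D ×ˢ I, 0 < d q + h q)
    -- pressure relations `P = p̌Q − ρgQ²/2 + ρ(Q³R₁/6 + Q²R₂/2)`
    (hPrel : ∀ q ∈ D ×ˢ I,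
      P q = pc q * (d q + h q) - ρ * g * (d q + h q) ^ 2 / 2
        + ρ * ((d q + h q) ^ 3 * accR1 u q / 6
             + (d q + h q) ^ 2 * accR2 u h q / 2))
    -- and `p̂ = p̌ − ρgQ + ρ(Q²R₁/2 + QR₂)`
    (hphrel : ∀ q ∈ D ×ˢ I,
      ph q = pc q - ρ * g * (d q + h q)
        + ρ * ((d q + h q) ^ 2 * accR1 u q / 2 + (d q + h q) * accR2 u h q))
    -- mass equation `Q_t + div(Q u̲) = 0`
    (hmass : ∀ q ∈ D ×ˢ I,
      pT (fun z => d z + h z) q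
        + pX1 (fun z => (d z + h z) * (u z).1) q
        + pX2 (fun z => (d z + h z) * (u z).2) q = 0)
    -- momentum equation `u̲_t + (u̲·∇)u̲ + ∇P/(ρQ) = (p̌∇h + p̂∇d)/(ρQ)`
    (hmom1 : ∀ q ∈ D ×ˢ I,
      matD u (fun z => (u z).1) q + pX1 P q / (ρ * (d q + h q)) =
        (pc q * pX1 h q + ph q * pX1 d q) / (ρ * (d q + h q)))
    (hmom2 : ∀ q ∈ D ×ˢ I,
      matD u (fun z => (u z).2) q + pX2 P q / (ρ * (d q + h q)) =
        (pc q * pX2 h q + ph q * pX2 d q) / (ρ * (d q + h q))) :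
    (∀ q ∈ D ×ˢ I,
      pT (fun z => (d z + h z) * innerE ρ g u h d z) q
        + pX1 (fun z => ((d z + h z) * innerE ρ g u h d z + P z) * (u z).1) q
        + pX2 (fun z => ((d z + h z) * innerE ρ g u h d z + P z) * (u z).2) q =
        -(pc q * pT h q) - ph q * pT d q)
    ∧ ((∀ q ∈ D ×ˢ I, pT h q = 0) → (∀ q ∈ D ×ˢ I, pT d q = 0) →
      ∀ q ∈ D ×ˢ I,
        pT (fun z => (d z + h z) * innerE ρ g u h d z) q
          + pX1 (fun z => ((d z + h z) * innerE ρ g u h d z + P z) * (u z).1) q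
          + pX2 (fun z => ((d z + h z) * innerE ρ g u h d z + P z) * (u z).2) q = 0) :=
  sgn_inner_energy_balance_general ρ g hρ D hD I hIopen h d u P pc ph hh hd hu hP hQpos hPrel hphrel
    hmass hmom1 hmom2

end
end

section
/- Let u : U×I → ℝ² be C¹ and f, g : U×I → ℝ be C² on an open set U ⊆ ℝ² times an interval I, and let D(·) := (·)_t + u·∇(·) denote the material derivative. Then at every point: ∇f ∧ ∇(Dg) = D(∇f ∧ ∇g) − ∇(Df) ∧ ∇g + (∇f ∧ ∇g)·div u. -/
noncomputable section

/-- Wedge of spatial gradients `∇f ∧ ∇g := f_{x₁} g_{x₂} − f_{x₂} g_{x₁}`. -/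
noncomputable def wedgeGrad (f g : Qt → ℝ) (q : Qt) : ℝ :=
  pX1 f q * pX2 g q - pX2 f q * pX1 g q

/-! Each spatial derivative commutes with `D` up to a transport term, `∂ᵢ(Dg) = D(∂ᵢg) + ∂ᵢu · ∇g`,
because second derivatives are symmetric. Since `D` is a derivation, `D(∇f ∧ ∇g)` expands by the
product rule, and the transport terms left over recombine into `(∇f ∧ ∇g) div u`. -/

section General

variable {𝕜 : Type*} [NontriviallyNormedField 𝕜] {E F : Type*}
  [NormedAddCommGroup E] [NormedSpace 𝕜 E] [NormedAddCommGroup F] [NormedSpace 𝕜 F]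
  {h : E → F} {x : E}

theorem ContDiffAt.differentiableAt_fderiv_apply_s12 (hh : ContDiffAt 𝕜 2 h x) (b : E) :
    DifferentiableAt 𝕜 (fun z => fderiv 𝕜 h z b) x :=
  ((hh.fderiv_right (m := 1) (by norm_num)).differentiableAt one_ne_zero).clm_apply
    (differentiableAt_const b)

/-- The second derivative of `h` is symmetric, so `∂ₐ` passes through `V · ∇`. -/
theorem fderiv_fderiv_apply_vectorField [IsRCLikeNormedField 𝕜] (hh : ContDiffAt 𝕜 2 h x)
    {V : E → E} (hV : DifferentiableAt 𝕜 V x) (a : E) :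
    fderiv 𝕜 (fun z => fderiv 𝕜 h z (V z)) x a =
      fderiv 𝕜 (fun z => fderiv 𝕜 h z a) x (V x) + fderiv 𝕜 h x (fderiv 𝕜 V x a) := by
  have hDh : DifferentiableAt 𝕜 (fderiv 𝕜 h) x :=
    (hh.fderiv_right (m := 1) (by norm_num)).differentiableAt one_ne_zero
  have hsymm := hh.isSymmSndFDerivAt (by simp)
  rw [fderiv_clm_apply hDh hV, fderiv_clm_apply hDh (differentiableAt_const a)]
  simp only [add_apply, ContinuousLinearMap.comp_apply, ContinuousLinearMap.flip_apply,
    fderiv_const_apply, zero_apply, map_zero, zero_add]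
  rw [hsymm.eq a (V x), add_comm]

end General

theorem fderiv_apply_eq_partials_s12 (f : Qt → ℝ) (q : Qt) (w : ℝ × ℝ) (s : ℝ) :
    fderiv ℝ f q (w, s) = w.1 * pX1 f q + w.2 * pX2 f q + s * pT f q := by
  have hdecomp : ((w, s) : Qt) = w.1 • (((1 : ℝ), (0 : ℝ)), (0 : ℝ))
      + w.2 • (((0 : ℝ), (1 : ℝ)), (0 : ℝ)) + s • (((0 : ℝ), (0 : ℝ)), (1 : ℝ)) := by
    ext <;> simp
  rw [hdecomp, map_add, map_add, map_smul, map_smul, map_smul]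
  rfl

theorem matD_eq_fderiv (u : Qt → ℝ × ℝ) (f : Qt → ℝ) (q : Qt) :
    matD u f q = fderiv ℝ f q (u q, 1) := by
  rw [fderiv_apply_eq_partials_s12, matD]
  ring

theorem fderiv_matD_apply {u : Qt → ℝ × ℝ} {f : Qt → ℝ} {q : Qt}
    (hu : DifferentiableAt ℝ u q) (hf : ContDiffAt ℝ 2 f q) (a : Qt) :
    fderiv ℝ (matD u f) q a =
      matD u (fun z => fderiv ℝ f z a) q + fderiv ℝ f q (fderiv ℝ u q a, 0) := by
  have hV : DifferentiableAt ℝ (fun z => (u z, (1 : ℝ))) q := hu.prodMk (differentiableAt_const 1)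
  rw [funext (matD_eq_fderiv u f), fderiv_fderiv_apply_vectorField hf hV, matD_eq_fderiv,
    hu.fderiv_prodMk (differentiableAt_const 1)]
  simp

theorem pX1_matD {u : Qt → ℝ × ℝ} {f : Qt → ℝ} {q : Qt}
    (hu : DifferentiableAt ℝ u q) (hf : ContDiffAt ℝ 2 f q) :
    pX1 (matD u f) q = matD u (pX1 f) q
      + pX1 (fun z => (u z).1) q * pX1 f q + pX1 (fun z => (u z).2) q * pX2 f q := by
  rw [pX1, fderiv_matD_apply hu hf, fderiv_apply_eq_partials_s12]
  unfold pX1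
  simp only [fderiv.fst hu, fderiv.snd hu, ContinuousLinearMap.comp_apply,
    ContinuousLinearMap.coe_fst', ContinuousLinearMap.coe_snd']
  ring

theorem pX2_matD {u : Qt → ℝ × ℝ} {f : Qt → ℝ} {q : Qt}
    (hu : DifferentiableAt ℝ u q) (hf : ContDiffAt ℝ 2 f q) :
    pX2 (matD u f) q = matD u (pX2 f) q
      + pX2 (fun z => (u z).1) q * pX1 f q + pX2 (fun z => (u z).2) q * pX2 f q := by
  rw [pX2, fderiv_matD_apply hu hf, fderiv_apply_eq_partials_s12]
  unfold pX2
  simp only [fderiv.fst hu, fderiv.snd hu, ContinuousLinearMap.comp_apply,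
    ContinuousLinearMap.coe_fst', ContinuousLinearMap.coe_snd']
  ring

theorem matD_wedgeGrad {u : Qt → ℝ × ℝ} {f g : Qt → ℝ} {q : Qt}
    (hf : ContDiffAt ℝ 2 f q) (hg : ContDiffAt ℝ 2 g q) :
    matD u (wedgeGrad f g) q =
      matD u (pX1 f) q * pX2 g q + pX1 f q * matD u (pX2 g) q
        - matD u (pX2 f) q * pX1 g q - pX2 f q * matD u (pX1 g) q := by
  have hf1 : DifferentiableAt ℝ (pX1 f) q := hf.differentiableAt_fderiv_apply_s12 _
  have hf2 : DifferentiableAt ℝ (pX2 f) q := hf.differentiableAt_fderiv_apply_s12 _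
  have hg1 : DifferentiableAt ℝ (pX1 g) q := hg.differentiableAt_fderiv_apply_s12 _
  have hg2 : DifferentiableAt ℝ (pX2 g) q := hg.differentiableAt_fderiv_apply_s12 _
  simp only [matD_eq_fderiv]
  rw [show wedgeGrad f g = fun z => pX1 f z * pX2 g z - pX2 f z * pX1 g z from rfl,
    fderiv_fun_sub (hf1.fun_mul hg2) (hf2.fun_mul hg1), fderiv_fun_mul hf1 hg2,
    fderiv_fun_mul hf2 hg1]
  simp only [sub_apply, add_apply, smul_apply, smul_eq_mul]
  ring

theorem wedge_gradient_material_identity_general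
    (U : Set (ℝ × ℝ)) (hU : IsOpen U)
    (I : Set ℝ) (hIopen : IsOpen I)
    (u : Qt → ℝ × ℝ) (f g : Qt → ℝ)
    (hu : ContDiffOn ℝ 1 u (U ×ˢ I))
    (hf : ContDiffOn ℝ 2 f (U ×ˢ I)) (hg : ContDiffOn ℝ 2 g (U ×ˢ I)) :
    ∀ q ∈ U ×ˢ I,
      wedgeGrad f (fun z => matD u g z) q =
        matD u (fun z => wedgeGrad f g z) q
          - wedgeGrad (fun z => matD u f z) g q
          + wedgeGrad f g q * divV u q := by
  intro q hq
  have hnhds : U ×ˢ I ∈ nhds q := (hU.prod hIopen).mem_nhds hq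
  have huq : DifferentiableAt ℝ u q := (hu.contDiffAt hnhds).differentiableAt one_ne_zero
  have hfq : ContDiffAt ℝ 2 f q := hf.contDiffAt hnhds
  have hgq : ContDiffAt ℝ 2 g q := hg.contDiffAt hnhds
  rw [matD_wedgeGrad hfq hgq]
  simp only [wedgeGrad, divV]
  rw [pX1_matD huq hgq, pX2_matD huq hgq, pX1_matD huq hfq, pX2_matD huq hfq]
  ring

/-- For C² scalar fields `f, g` and a C¹ velocity field `u`
with material derivative `D(·) = (·)_t + u·∇(·)`, one has
`∇f ∧ ∇(Dg) = D(∇f ∧ ∇g) − ∇(Df) ∧ ∇g + (∇f ∧ ∇g)·div u`. -/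
theorem wedge_gradient_material_identity
    (U : Set (ℝ × ℝ)) (hU : IsOpen U)
    (I : Set ℝ) (hIopen : IsOpen I) (hIord : I.OrdConnected)
    (u : Qt → ℝ × ℝ) (f g : Qt → ℝ)
    (hu : ContDiffOn ℝ 1 u (U ×ˢ I))
    (hf : ContDiffOn ℝ 2 f (U ×ˢ I)) (hg : ContDiffOn ℝ 2 g (U ×ˢ I)) :
    ∀ q ∈ U ×ˢ I,
      wedgeGrad f (fun z => matD u g z) q =
        matD u (fun z => wedgeGrad f g z) q
          - wedgeGrad (fun z => matD u f z) g q
          + wedgeGrad f g q * divV u q :=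
  wedge_gradient_material_identity_general U hU I hIopen u f g hu hf hg

end
end
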